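/- Let G be an infinite, connected, locally finite, vertex-transitive simple graph that is not a tree, and let C = x₀,…,x_N = x₀ be a cycle in G with no repeated vertex. Then there exist R > 0, M > 0, a sequence (φ_k)_{k∈ℕ} of automorphisms of G such that the cycles C_k = φ_k(C) are pairwise vertex-disjoint and their union is R-dense (every vertex of G is at graph distance at most R from ∪_k C_k), and a partition (P_k)_{k∈ℕ} of V(G) into connected sets such that C_k ⊆ P_k and |P_k| ≤ M for every k. -/

import Mathlib

/-- `G` is vertex-transitive. -/
def IsVertexTransitive {V : Type*} (G : SimpleGraph V) : Prop :=
  ∀ u v : V, ∃ φ : G ≃g G, φ u = v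

open Function Set SimpleGraph

namespace CyclePartitionAux

variable {V : Type*} {G : SimpleGraph V}

lemma reachable_induce {s : Set V} {a b : V} (p : G.Walk a b)
    (hp : ∀ u ∈ p.support, u ∈ s) (ha : a ∈ s) (hb : b ∈ s) :
    (G.induce s).Reachable ⟨a, ha⟩ ⟨b, hb⟩ := by
  induction p with
  | nil => rfl
  | @cons u w b h p ih =>
    have hw : w ∈ s := hp w (by simp)
    have h1 : (G.induce s).Adj ⟨u, ha⟩ ⟨w, hw⟩ := h
    exact (h1.reachable).trans (ih (fun x hx => hp x (by simp [hx])) hw hb)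

lemma dist_iso (hconn : G.Connected) (ψ : G ≃g G) (a b : V) :
    G.dist (ψ a) (ψ b) = G.dist a b := by
  have key : ∀ (ψ : G ≃g G) (a b : V), G.dist (ψ a) (ψ b) ≤ G.dist a b := by
    intro ψ a b
    obtain ⟨p, hp⟩ := hconn.exists_walk_length_eq_dist a b
    calc G.dist (ψ a) (ψ b) ≤ (p.map ψ.toHom).length := dist_le _
      _ = p.length := Walk.length_map _ _
      _ = G.dist a b := hp
  refine le_antisymm (key ψ a b) ?_
  have h2 := key ψ.symm (ψ a) (ψ b)
  simpa using h2

/-- balls are finite in a connected locally finite graph -/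
lemma ball_finite (hconn : G.Connected) (hlf : ∀ v : V, (G.neighborSet v).Finite)
    (n : ℕ) (v : V) : {w | G.dist w v ≤ n}.Finite := by
  induction n with
  | zero =>
    refine (Set.finite_singleton v).subset ?_
    intro w hw
    simp only [mem_setOf_eq, Nat.le_zero] at hw
    exact (hconn.dist_eq_zero_iff.mp hw)
  | succ n ih =>
    refine (ih.union (ih.biUnion (fun u _ => hlf u))).subset ?_
    intro w hw
    simp only [mem_setOf_eq] at hw
    rcases Nat.lt_or_ge (G.dist w v) (n + 1) with h | h
    · exact Or.inl (Nat.lt_succ_iff.mp h)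
    · have hd : G.dist w v = n + 1 := le_antisymm hw h
      have hr : G.Reachable w v := Reachable.of_dist_ne_zero (by omega)
      obtain ⟨p, hp⟩ := hr.exists_walk_length_eq_dist
      cases p with
      | nil => rw [hd] at hp; simp at hp
      | @cons _ u _ hadj q =>
        right
        refine Set.mem_biUnion (x := u) ?_ hadj.symm
        have : G.dist u v ≤ q.length := dist_le q
        simp only [Walk.length_cons, hd] at hp
        simp only [mem_setOf_eq]
        omega

lemma countable_of_connected (hconn : G.Connected) (hlf : ∀ v : V, (G.neighborSet v).Finite) :
    Countable V := by
  obtain ⟨x⟩ := hconn.nonempty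
  have huniv : (Set.univ : Set V) = ⋃ n : ℕ, {w | G.dist w x ≤ n} := by
    ext w
    simp only [mem_univ, mem_iUnion, mem_setOf_eq, true_iff]
    exact ⟨G.dist w x, le_rfl⟩
  exact Set.countable_univ_iff.mp
    (huniv ▸ Set.countable_iUnion fun n => (ball_finite hconn hlf n x).countable)

open scoped Classical

structure Ctx (V : Type*) where
  G : SimpleGraph V
  hinf : Infinite V
  hconn : G.Connected
  hlf : ∀ v : V, (G.neighborSet v).Finite
  htrans : IsVertexTransitive G
  x₀ : V
  c : G.Walk x₀ x₀
  hc : c.IsCycle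
  e : ℕ → V
  he : Function.Surjective e

namespace Ctx

variable {V : Type*} (X : Ctx V)

def S : Set V := {v | v ∈ X.c.support}

def N : ℕ := X.c.length

lemma N_pos : 0 < X.N := by
  have := X.hc.three_le_length
  unfold N; omega

lemma S_finite : X.S.Finite := X.c.support.finite_toSet

def Cyc (ψ : X.G ≃g X.G) : Set V := ⇑ψ '' X.S

lemma Cyc_finite (ψ : X.G ≃g X.G) : (X.Cyc ψ).Finite := X.S_finite.image _

/-- the vertex on `Cyc ψ` corresponding to the basepoint -/
lemma basepoint_mem (ψ : X.G ≃g X.G) : ψ X.x₀ ∈ X.Cyc ψ :=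
  ⟨X.x₀, X.c.start_mem_support, rfl⟩

/-- every vertex of `Cyc ψ` is within distance `N` of `ψ x₀` -/
lemma dist_basepoint {ψ : X.G ≃g X.G} {u : V} (hu : u ∈ X.Cyc ψ) :
    X.G.dist (ψ X.x₀) u ≤ X.N := by
  obtain ⟨s, hs, rfl⟩ := hu
  have hs' : s ∈ X.c.support := hs
  calc X.G.dist (ψ X.x₀) (ψ s) ≤ ((X.c.takeUntil s hs').map ψ.toHom).length :=
        dist_le _
    _ = (X.c.takeUntil s hs').length := Walk.length_map _ _
    _ ≤ X.c.length := Walk.length_takeUntil_le _ _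
    _ = X.N := rfl

/-- forbidden region: everything within distance `N` of one of the listed cycles -/
def Fset (L : List (X.G ≃g X.G)) : Set V :=
  {w | ∃ ψ ∈ L, ∃ u ∈ X.Cyc ψ, X.G.dist w u ≤ X.N}

lemma Fset_finite (L : List (X.G ≃g X.G)) : (X.Fset L).Finite := by
  have : X.Fset L ⊆ ⋃ ψ ∈ {ψ | ψ ∈ L}, ⋃ u ∈ X.Cyc ψ, {w | X.G.dist w u ≤ X.N} := by
    intro w hw
    obtain ⟨ψ, hψ, u, hu, hd⟩ := hw
    simp only [mem_iUnion, mem_setOf_eq]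
    exact ⟨ψ, hψ, u, hu, hd⟩
  refine (Set.Finite.biUnion L.finite_toSet fun ψ _ =>
    Set.Finite.biUnion (X.Cyc_finite ψ) fun u _ => ?_).subset this
  exact ball_finite X.hconn X.hlf X.N u

lemma Fset_mono {L L' : List (X.G ≃g X.G)} (h : ∀ ψ ∈ L, ψ ∈ L') :
    X.Fset L ⊆ X.Fset L' := by
  intro w hw
  obtain ⟨ψ, hψ, u, hu, hd⟩ := hw
  exact ⟨ψ, h ψ hψ, u, hu, hd⟩

lemma exists_not_mem (L : List (X.G ≃g X.G)) : ∃ m, X.e m ∉ X.Fset L := by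
  by_contra h
  push_neg at h
  have hsub : (Set.univ : Set V) ⊆ X.Fset L := by
    intro v _
    obtain ⟨m, rfl⟩ := X.he v
    exact h m
  haveI := X.hinf
  exact ((Set.infinite_univ (α := V)).mono hsub) (X.Fset_finite L)

noncomputable def mIdx (L : List (X.G ≃g X.G)) : ℕ := Nat.find (X.exists_not_mem L)

lemma mIdx_spec (L : List (X.G ≃g X.G)) : X.e (X.mIdx L) ∉ X.Fset L :=
  Nat.find_spec (X.exists_not_mem L)

lemma mIdx_min {L : List (X.G ≃g X.G)} {i : ℕ} (hi : i < X.mIdx L) :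
    X.e i ∈ X.Fset L := not_not.mp (Nat.find_min (X.exists_not_mem L) hi)

lemma mIdx_le {L : List (X.G ≃g X.G)} {m : ℕ} (hm : X.e m ∉ X.Fset L) :
    X.mIdx L ≤ m := Nat.find_le hm

noncomputable def step (L : List (X.G ≃g X.G)) : X.G ≃g X.G :=
  (X.htrans X.x₀ (X.e (X.mIdx L))).choose

lemma step_spec (L : List (X.G ≃g X.G)) : X.step L X.x₀ = X.e (X.mIdx L) :=
  (X.htrans X.x₀ (X.e (X.mIdx L))).choose_spec

lemma step_not_mem (L : List (X.G ≃g X.G)) : X.step L X.x₀ ∉ X.Fset L := by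
  rw [X.step_spec L]; exact X.mIdx_spec L

noncomputable def Ls : ℕ → List (X.G ≃g X.G)
  | 0 => []
  | (k + 1) => Ls k ++ [X.step (Ls k)]

noncomputable def phi (k : ℕ) : X.G ≃g X.G := X.step (X.Ls k)

lemma Ls_succ (k : ℕ) : X.Ls (k + 1) = X.Ls k ++ [X.phi k] := rfl

lemma Ls_mono {k l : ℕ} (h : k ≤ l) : ∀ ψ ∈ X.Ls k, ψ ∈ X.Ls l := by
  induction l with
  | zero =>
    intro ψ hψ
    have hk : k = 0 := by omega
    subst hk; exact hψ
  | succ l ih =>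
    intro ψ hψ
    rcases Nat.lt_or_ge k (l + 1) with h' | h'
    · rw [X.Ls_succ l]
      exact List.mem_append_left _ (ih (by omega) ψ hψ)
    · have : k = l + 1 := by omega
      subst this; exact hψ

lemma phi_mem_Ls {j k : ℕ} (h : j < k) : X.phi j ∈ X.Ls k := by
  have : X.phi j ∈ X.Ls (j + 1) := by
    rw [X.Ls_succ j]; exact List.mem_append_right _ (List.mem_singleton.mpr rfl)
  exact X.Ls_mono h _ this

lemma mem_Ls {k : ℕ} {ψ : X.G ≃g X.G} (h : ψ ∈ X.Ls k) : ∃ j < k, ψ = X.phi j := by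
  induction k with
  | zero => simp [Ls] at h
  | succ k ih =>
    rw [X.Ls_succ k] at h
    rcases List.mem_append.mp h with h | h
    · obtain ⟨j, hj, rfl⟩ := ih h
      exact ⟨j, by omega, rfl⟩
    · exact ⟨k, by omega, List.mem_singleton.mp h⟩

lemma disj_aux {j k : ℕ} (h : j < k) : Disjoint (X.Cyc (X.phi j)) (X.Cyc (X.phi k)) := by
  rw [Set.disjoint_left]
  intro u huj huk
  apply X.step_not_mem (X.Ls k)
  refine ⟨X.phi j, X.phi_mem_Ls h, u, huj, ?_⟩
  exact X.dist_basepoint huk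

lemma cyc_disjoint : Pairwise fun k l => Disjoint (X.Cyc (X.phi k)) (X.Cyc (X.phi l)) := by
  intro k l hkl
  rcases Nat.lt_or_ge k l with h | h
  · exact X.disj_aux h
  · exact (X.disj_aux (by omega)).symm

lemma mIdx_lt_succ (k : ℕ) : X.mIdx (X.Ls k) < X.mIdx (X.Ls (k + 1)) := by
  by_contra hcon
  push_neg at hcon
  have h1 : X.e (X.mIdx (X.Ls (k + 1))) ∈ X.Fset (X.Ls (k + 1)) := by
    rcases Nat.lt_or_ge (X.mIdx (X.Ls (k + 1))) (X.mIdx (X.Ls k)) with h | h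
    · exact X.Fset_mono (X.Ls_mono (Nat.le_succ k)) (X.mIdx_min h)
    · have : X.mIdx (X.Ls (k + 1)) = X.mIdx (X.Ls k) := by omega
      rw [this, ← X.step_spec (X.Ls k)]
      refine ⟨X.phi k, X.phi_mem_Ls (Nat.lt_succ_self k), X.step (X.Ls k) X.x₀,
        X.basepoint_mem _, by rw [SimpleGraph.dist_self]; exact Nat.zero_le _⟩
  exact X.mIdx_spec (X.Ls (k + 1)) h1

lemma le_mIdx (k : ℕ) : k ≤ X.mIdx (X.Ls k) := by
  induction k with
  | zero => omega
  | succ k ih => have := X.mIdx_lt_succ k; omega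

def U : Set V := ⋃ k, X.Cyc (X.phi k)

lemma dens_le (v : V) : ∃ u ∈ X.U, X.G.dist v u ≤ X.N := by
  by_contra h
  push_neg at h
  obtain ⟨m₀, hm₀⟩ := X.he v
  have hv : ∀ k, v ∉ X.Fset (X.Ls k) := by
    intro k hvk
    obtain ⟨ψ, hψ, u, hu, hd⟩ := hvk
    obtain ⟨j, _, rfl⟩ := X.mem_Ls hψ
    exact absurd hd (not_le.mpr (h u (Set.mem_iUnion.mpr ⟨j, hu⟩)))
  have h1 : ∀ k, X.mIdx (X.Ls k) ≤ m₀ := fun k => X.mIdx_le (hm₀ ▸ hv k)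
  have h2 := X.le_mIdx (m₀ + 1)
  have h3 := h1 (m₀ + 1)
  omega




lemma dens (v : V) : ∃ n : ℕ, ∃ u ∈ X.U, X.G.dist v u ≤ n := ⟨X.N, X.dens_le v⟩

noncomputable def D (v : V) : ℕ := Nat.find (X.dens v)

lemma D_le (v : V) : X.D v ≤ X.N := Nat.find_le (X.dens_le v)

lemma D_spec (v : V) : ∃ u ∈ X.U, X.G.dist v u ≤ X.D v := Nat.find_spec (X.dens v)

lemma D_min {v : V} {n : ℕ} (h : n < X.D v) : ¬ ∃ u ∈ X.U, X.G.dist v u ≤ n :=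
  Nat.find_min (X.dens v) h

lemma mem_U_of_D_eq_zero {v : V} (h : X.D v = 0) : v ∈ X.U := by
  obtain ⟨u, hu, hd⟩ := X.D_spec v
  rw [h, Nat.le_zero] at hd
  have hvu : v = u := X.hconn.dist_eq_zero_iff.mp hd
  rwa [hvu]

lemma parent_exists {v : V} (h : v ∉ X.U) : ∃ w, X.G.Adj v w ∧ X.D w < X.D v := by
  have hD0 : X.D v ≠ 0 := fun h0 => h (X.mem_U_of_D_eq_zero h0)
  obtain ⟨u, hu, hd⟩ := X.D_spec v
  have hdeq : X.G.dist v u = X.D v := by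
    refine le_antisymm hd ?_
    by_contra hlt
    push_neg at hlt
    exact X.D_min hlt ⟨u, hu, le_rfl⟩
  obtain ⟨p, hp⟩ := (X.hconn v u).exists_walk_length_eq_dist
  cases p with
  | nil =>
    rw [hdeq] at hp
    simp only [Walk.length_nil] at hp
    exact absurd hp.symm hD0
  | @cons _ w _ hadj q =>
    refine ⟨w, hadj, ?_⟩
    have h1 : X.D w ≤ q.length := Nat.find_le ⟨u, hu, dist_le q⟩
    rw [hdeq] at hp
    simp only [Walk.length_cons] at hp
    omega

noncomputable def parent {v : V} (h : v ∉ X.U) : V := (X.parent_exists h).choose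

lemma parent_adj {v : V} (h : v ∉ X.U) : X.G.Adj v (X.parent h) :=
  (X.parent_exists h).choose_spec.1

lemma parent_D {v : V} (h : v ∉ X.U) : X.D (X.parent h) < X.D v :=
  (X.parent_exists h).choose_spec.2

noncomputable def f (v : V) : ℕ :=
  if h : v ∈ X.U then (Set.mem_iUnion.mp h).choose
  else f (X.parent h)
termination_by X.D v
decreasing_by exact X.parent_D h

lemma f_spec_mem {v : V} (h : v ∈ X.U) : v ∈ X.Cyc (X.phi (X.f v)) := by
  rw [f, dif_pos h]
  exact (Set.mem_iUnion.mp h).choose_spec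

lemma f_eq {v : V} {k : ℕ} (h : v ∈ X.Cyc (X.phi k)) : X.f v = k := by
  have hU : v ∈ X.U := Set.mem_iUnion.mpr ⟨k, h⟩
  by_contra hne
  exact Set.disjoint_left.mp (X.cyc_disjoint hne) (X.f_spec_mem hU) h

lemma f_not_mem {v : V} (h : v ∉ X.U) : X.f v = X.f (X.parent h) := by
  rw [f, dif_neg h]

lemma f_anchor (k : ℕ) : X.f (X.phi k X.x₀) = k := X.f_eq (X.basepoint_mem _)

lemma key_base {v : V} (h : v ∈ X.U) :
    ∃ p : X.G.Walk v (X.phi (X.f v) X.x₀),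
      p.length ≤ X.D v + X.N ∧ ∀ u ∈ p.support, X.f u = X.f v := by
  obtain ⟨s, hs, hv⟩ := X.f_spec_mem h
  have hs' : s ∈ X.c.support := hs
  refine ⟨(((X.c.takeUntil s hs').map (X.phi (X.f v)).toHom).reverse).copy hv rfl, ?_, ?_⟩
  · rw [Walk.length_copy, Walk.length_reverse, Walk.length_map]
    have := Walk.length_takeUntil_le X.c hs'
    have hN : X.N = X.c.length := rfl
    omega
  · intro u hu
    rw [Walk.support_copy, Walk.support_reverse, List.mem_reverse, Walk.support_map,
      List.mem_map] at hu
    obtain ⟨s'', hs'', rfl⟩ := hu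
    have : s'' ∈ X.c.support := Walk.support_takeUntil_subset _ _ hs''
    exact X.f_eq ⟨s'', this, rfl⟩

lemma key : ∀ (n : ℕ) (v : V), X.D v ≤ n →
    ∃ p : X.G.Walk v (X.phi (X.f v) X.x₀),
      p.length ≤ X.D v + X.N ∧ ∀ u ∈ p.support, X.f u = X.f v := by
  intro n
  induction n with
  | zero =>
    intro v hv
    exact X.key_base (X.mem_U_of_D_eq_zero (Nat.le_zero.mp hv))
  | succ n ih =>
    intro v hv
    by_cases h : v ∈ X.U
    · exact X.key_base h
    · have hlt := X.parent_D h
      obtain ⟨p, hp1, hp2⟩ := ih (X.parent h) (by omega)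
      have hfv : X.f v = X.f (X.parent h) := X.f_not_mem h
      refine ⟨(Walk.cons (X.parent_adj h) p).copy rfl (by rw [hfv]), ?_, ?_⟩
      · rw [Walk.length_copy, Walk.length_cons]
        have := X.D_le (X.parent h)
        omega
      · intro u hu
        rw [Walk.support_copy, Walk.support_cons, List.mem_cons] at hu
        rcases hu with rfl | hu
        · rfl
        · rw [hfv]; exact hp2 u hu

lemma key' (v : V) :
    ∃ p : X.G.Walk v (X.phi (X.f v) X.x₀),
      p.length ≤ X.N + X.N ∧ ∀ u ∈ p.support, X.f u = X.f v := by
  obtain ⟨p, hp1, hp2⟩ := X.key (X.D v) v le_rfl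
  exact ⟨p, le_trans hp1 (by have := X.D_le v; omega), hp2⟩

end Ctx
end CyclePartitionAux

open CyclePartitionAux in

/-- **Lemma (dense packing of disjoint copies of a cycle).** Let `G` be an infinite,
connected, locally finite, vertex-transitive simple graph that is not a tree, and let `c` be
a cycle of `G`. Then there are `R, M > 0`, a sequence `(φ_k)` of automorphisms of `G` whose
images `C_k = φ_k(C)` of the vertex set of the cycle are pairwise disjoint and whose union is
`R`-dense, and a partition `(P_k)` of the vertices into connected pieces with `C_k ⊆ P_k` and
`|P_k| ≤ M`. -/
theorem cycle_partition {V : Type*} (G : SimpleGraph V)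
    (hinf : Infinite V) (hconn : G.Connected)
    (hlf : ∀ v : V, (G.neighborSet v).Finite)
    (htrans : IsVertexTransitive G)
    (x₀ : V) (c : G.Walk x₀ x₀) (hc : c.IsCycle) :
    ∃ (R M : ℕ), 0 < R ∧ 0 < M ∧
      ∃ (φ : ℕ → G ≃g G) (P : ℕ → Set V),
        (Pairwise fun k l =>
          Disjoint (⇑(φ k) '' {v | v ∈ c.support}) (⇑(φ l) '' {v | v ∈ c.support})) ∧
        (∀ v : V, ∃ (k : ℕ) (u : V), u ∈ ⇑(φ k) '' {v' | v' ∈ c.support} ∧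
          ∃ w : G.Walk v u, w.length ≤ R) ∧
        (∀ k, ⇑(φ k) '' {v | v ∈ c.support} ⊆ P k) ∧
        (Pairwise fun k l => Disjoint (P k) (P l)) ∧
        (⋃ k, P k) = Set.univ ∧
        (∀ k, (G.induce (P k)).Connected) ∧
        (∀ k, (P k).Finite ∧ (P k).ncard ≤ M) := by
  classical
  haveI := hinf
  haveI : Countable V := countable_of_connected hconn hlf
  obtain ⟨e, he⟩ := exists_surjective_nat V
  let X : CyclePartitionAux.Ctx V := ⟨G, hinf, hconn, hlf, htrans, x₀, c, hc, e, he⟩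
  refine ⟨X.N, ({w | G.dist w x₀ ≤ X.N + X.N}).ncard, X.N_pos, ?_, X.phi,
    fun k => X.f ⁻¹' {k}, ?_, ?_, ?_, ?_, ?_, ?_, ?_⟩
  · exact (Set.ncard_pos (ball_finite hconn hlf _ x₀)).mpr
      ⟨x₀, by simp [SimpleGraph.dist_self]⟩
  · exact X.cyc_disjoint
  · -- density
    intro v
    obtain ⟨u, hu, hd⟩ := X.dens_le v
    obtain ⟨k, hk⟩ := Set.mem_iUnion.mp hu
    obtain ⟨w, hw⟩ := (hconn v u).exists_walk_length_eq_dist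
    exact ⟨k, u, hk, w, by rw [hw]; exact hd⟩
  · -- cycles inside pieces
    intro k v hv
    simp only [Set.mem_preimage, Set.mem_singleton_iff]
    exact X.f_eq hv
  · -- pairwise disjoint pieces
    intro k l hkl
    rw [Set.disjoint_left]
    intro v hvk hvl
    simp only [Set.mem_preimage, Set.mem_singleton_iff] at hvk hvl
    exact hkl (hvk ▸ hvl.symm ▸ rfl)
  · -- union is everything
    ext v
    simp only [Set.mem_iUnion, Set.mem_preimage, Set.mem_singleton_iff, Set.mem_univ, iff_true]
    exact ⟨X.f v, rfl⟩
  · -- connectivity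
    intro k
    have hanch : X.phi k x₀ ∈ X.f ⁻¹' {k} := by
      simp only [Set.mem_preimage, Set.mem_singleton_iff]
      exact X.f_anchor k
    haveI : Nonempty (X.f ⁻¹' {k} : Set V) := ⟨⟨X.phi k x₀, hanch⟩⟩
    refine ⟨?_⟩
    rintro ⟨a, ha⟩ ⟨b, hb⟩
    have ha' : X.f a = k := ha
    have hb' : X.f b = k := hb
    obtain ⟨p, _, hp⟩ := X.key' a
    obtain ⟨q, _, hq⟩ := X.key' b
    have hpa : X.phi (X.f a) X.x₀ ∈ X.f ⁻¹' {k} := by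
      simp only [Set.mem_preimage, Set.mem_singleton_iff]
      rw [X.f_anchor (X.f a), ha']
    have hqb : X.phi (X.f b) X.x₀ ∈ X.f ⁻¹' {k} := by
      simp only [Set.mem_preimage, Set.mem_singleton_iff]
      rw [X.f_anchor (X.f b), hb']
    have ra := reachable_induce (s := X.f ⁻¹' {k}) p
      (fun u hu => by
        simp only [Set.mem_preimage, Set.mem_singleton_iff]
        rw [hp u hu, ha']) ha hpa
    have rb := reachable_induce (s := X.f ⁻¹' {k}) q
      (fun u hu => by
        simp only [Set.mem_preimage, Set.mem_singleton_iff]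
        rw [hq u hu, hb']) hb hqb
    have hend : (⟨X.phi (X.f b) X.x₀, hqb⟩ : (X.f ⁻¹' {k} : Set V)) =
        ⟨X.phi (X.f a) X.x₀, hpa⟩ :=
      Subtype.ext (show X.phi (X.f b) X.x₀ = X.phi (X.f a) X.x₀ by rw [ha', hb'])
    exact ra.trans ((hend ▸ rb).symm)
  · -- finiteness and cardinality
    intro k
    have hsub : X.f ⁻¹' {k} ⊆ {w | G.dist w (X.phi k x₀) ≤ X.N + X.N} := by
      intro v hv
      have hfv : X.f v = k := hv
      obtain ⟨p, hp1, _⟩ := X.key' v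
      have hle : G.dist v (X.phi (X.f v) x₀) ≤ p.length := dist_le p
      have heq : G.dist v (X.phi k x₀) = G.dist v (X.phi (X.f v) x₀) := by rw [hfv]
      show G.dist v (X.phi k x₀) ≤ X.N + X.N
      rw [heq]
      exact le_trans hle hp1
    have hBfin := ball_finite hconn hlf (X.N + X.N) (X.phi k x₀)
    refine ⟨hBfin.subset hsub, ?_⟩
    have himg : {w | G.dist w (X.phi k x₀) ≤ X.N + X.N} =
        ⇑(X.phi k) '' {w | G.dist w x₀ ≤ X.N + X.N} := by
      ext w
      simp only [Set.mem_setOf_eq, Set.mem_image]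
      constructor
      · intro hw
        refine ⟨(X.phi k).symm w, ?_, by simp⟩
        have hdi := dist_iso hconn (X.phi k) ((X.phi k).symm w) x₀
        rw [RelIso.apply_symm_apply] at hdi
        rw [← hdi]
        exact hw
      · rintro ⟨w', hw', rfl⟩
        rw [dist_iso hconn (X.phi k) w' x₀]
        exact hw'
    calc (X.f ⁻¹' {k}).ncard ≤ {w | G.dist w (X.phi k x₀) ≤ X.N + X.N}.ncard :=
          Set.ncard_le_ncard hsub hBfin
      _ = _ := by rw [himg, Set.ncard_image_of_injective _ (X.phi k).injective]
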